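/- Let W be a finite set of integers, each at least 1, and let L ≥ 1 and Q ≥ 1 be integers. For an integer N, consider the set of all finite sequences ((w_1, n_1), ..., (w_k, n_k)) of pairs of integers (of any length k ≥ 0) satisfying: (i) w_i ∈ W for every i; (ii) n_1 ≥ n_2 ≥ ... ≥ n_k; (iii) n_i > -L for every i; (iv) if n_i > 0 and i < j then n_i > n_j (the positive values among the n_i are pairwise distinct); (v) for every integer a ≤ 0, the number of indices i with n_i = a is at most Q - 1; and (vi) the sum over i of (w_i + n_i - 1) equals N. Then this set of sequences is finite. -/
import Mathlib


/-- Combinatorial finiteness underlying Corollary 5.6: the set of all finite sequences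
`((w_1, n_1), ..., (w_k, n_k))` with weights `w_i` from a finite set `W` of integers `≥ 1`,
modes `n_1 ≥ ... ≥ n_k` all `> -L`, positive modes strictly decreasing, each nonpositive
mode value repeated at most `Q - 1` times, and total weight `∑ (w_i + n_i - 1) = N`,
is finite. -/
theorem spanning_patterns_finite
    (W : Finset ℤ) (hW : ∀ w ∈ W, 1 ≤ w)
    (L Q : ℤ) (hL : 1 ≤ L) (hQ : 1 ≤ Q) (N : ℤ) :
    {p : Σ k : ℕ, Fin k → ℤ × ℤ |
      (∀ i, (p.2 i).1 ∈ W) ∧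
      (∀ i j : Fin p.1, i ≤ j → (p.2 j).2 ≤ (p.2 i).2) ∧
      (∀ i, -L < (p.2 i).2) ∧
      (∀ i j : Fin p.1, i < j → 0 < (p.2 i).2 → (p.2 j).2 < (p.2 i).2) ∧
      (∀ a : ℤ, a ≤ 0 →
        ((Finset.univ.filter (fun i => (p.2 i).2 = a)).card : ℤ) ≤ Q - 1) ∧
      (∑ i, ((p.2 i).1 + (p.2 i).2 - 1) = N)}.Finite := by
  classical
  set B : ℤ := L * (Q - 1) with hBdef
  set K : ℕ := (N + B * L).toNat with hKdef
  set M : ℤ := N + (K : ℤ) * (L - 1) with hMdef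
  set S : Finset (ℤ × ℤ) := W ×ˢ Finset.Icc (1 - L) M with hSdef
  have hFin : Set.Finite (⋃ k ∈ Finset.range (K + 1),
      Sigma.mk k '' {f : Fin k → ℤ × ℤ | ∀ i, f i ∈ S}) := by
    apply Set.Finite.biUnion (Finset.range (K + 1)).finite_toSet
    intro k _
    apply Set.Finite.image
    exact Set.Finite.subset (Set.Finite.pi (fun _ : Fin k => S.finite_toSet))
      (fun f hf i _ => hf i)
  refine hFin.subset ?_
  rintro ⟨k, f⟩ ⟨h1, h2, h3, h4, h5, h6⟩
  dsimp only at h1 h2 h3 h4 h5 h6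
  have hterm : ∀ i : Fin k, 1 - L ≤ (f i).1 + (f i).2 - 1 := by
    intro i
    have hw := hW _ (h1 i)
    have hn := h3 i
    omega
  -- split into positive and nonpositive modes
  set P := Finset.univ.filter (fun i : Fin k => 0 < (f i).2) with hPdef
  set Np := Finset.univ.filter (fun i : Fin k => ¬ 0 < (f i).2) with hNpdef
  have hcardNp : (Np.card : ℤ) ≤ B := by
    have hsub : Np ⊆ (Finset.Icc (1 - L) 0).biUnion
        (fun a => Finset.univ.filter (fun i => (f i).2 = a)) := by
      intro i hi
      simp only [hNpdef, Finset.mem_filter, Finset.mem_univ, true_and] at hi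
      have hn := h3 i
      refine Finset.mem_biUnion.2 ⟨(f i).2, ?_, ?_⟩
      · rw [Finset.mem_Icc]; omega
      · simp
    have hIcc : ((Finset.Icc (1 - L) 0).card : ℤ) = L := by
      rw [Int.card_Icc]; omega
    calc (Np.card : ℤ)
        ≤ (((Finset.Icc (1 - L) 0).biUnion
            (fun a => Finset.univ.filter (fun i => (f i).2 = a))).card : ℤ) := by
          exact_mod_cast Finset.card_le_card hsub
      _ ≤ ∑ a ∈ Finset.Icc (1 - L) 0,
            ((Finset.univ.filter (fun i => (f i).2 = a)).card : ℤ) := by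
          exact_mod_cast Finset.card_biUnion_le
      _ ≤ ∑ _a ∈ Finset.Icc (1 - L) 0, (Q - 1) :=
          Finset.sum_le_sum (fun a ha => h5 a (Finset.mem_Icc.1 ha).2)
      _ = ((Finset.Icc (1 - L) 0).card : ℤ) * (Q - 1) := by
          rw [Finset.sum_const, nsmul_eq_mul]
      _ = B := by rw [hIcc, hBdef]
  have hsumP : (P.card : ℤ) ≤ ∑ i ∈ P, ((f i).1 + (f i).2 - 1) := by
    have hone : ∀ i ∈ P, (1 : ℤ) ≤ (f i).1 + (f i).2 - 1 := by
      intro i hi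
      simp only [hPdef, Finset.mem_filter, Finset.mem_univ, true_and] at hi
      have hw := hW _ (h1 i)
      omega
    calc (P.card : ℤ) = ∑ _i ∈ P, (1 : ℤ) := by
          rw [Finset.sum_const, nsmul_eq_mul, mul_one]
      _ ≤ _ := Finset.sum_le_sum hone
  have hsumNp : (Np.card : ℤ) * (1 - L) ≤ ∑ i ∈ Np, ((f i).1 + (f i).2 - 1) := by
    calc (Np.card : ℤ) * (1 - L) = ∑ _i ∈ Np, (1 - L) := by
          rw [Finset.sum_const, nsmul_eq_mul]
      _ ≤ _ := Finset.sum_le_sum (fun i _ => hterm i)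
  have hsplit : (∑ i ∈ P, ((f i).1 + (f i).2 - 1))
      + ∑ i ∈ Np, ((f i).1 + (f i).2 - 1) = N := by
    rw [hPdef, hNpdef, Finset.sum_filter_add_sum_filter_not]
    exact h6
  have hcards : P.card + Np.card = k := by
    rw [hPdef, hNpdef, Finset.card_filter_add_card_filter_not,
      Finset.card_univ, Fintype.card_fin]
  have hNpL : (Np.card : ℤ) * L ≤ B * L := by
    exact mul_le_mul_of_nonneg_right hcardNp (by omega)
  have hkNBL : (k : ℤ) ≤ N + B * L := by
    have hc : ((P.card : ℤ) + (Np.card : ℤ)) = (k : ℤ) := by exact_mod_cast hcards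
    nlinarith [hsumP, hsumNp, hsplit]
  have h0 : (0 : ℤ) ≤ N + B * L := le_trans (Int.natCast_nonneg k) hkNBL
  have hkK : k ≤ K := by
    rw [hKdef]
    exact (Int.le_toNat h0).2 hkNBL
  have hfle : ∀ i : Fin k, (f i).2 ≤ M := by
    intro i
    have hsum : ((f i).1 + (f i).2 - 1)
        + ∑ j ∈ Finset.univ.erase i, ((f j).1 + (f j).2 - 1) = N := by
      have h := Finset.add_sum_erase Finset.univ
        (fun j => (f j).1 + (f j).2 - 1) (Finset.mem_univ i)
      rw [h6] at h
      exact h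
    have hrest : ((Finset.univ.erase i).card : ℤ) * (1 - L)
        ≤ ∑ j ∈ Finset.univ.erase i, ((f j).1 + (f j).2 - 1) := by
      calc ((Finset.univ.erase i).card : ℤ) * (1 - L)
          = ∑ _j ∈ Finset.univ.erase i, (1 - L) := by
            rw [Finset.sum_const, nsmul_eq_mul]
        _ ≤ _ := Finset.sum_le_sum (fun j _ => hterm j)
    have hkpos : 1 ≤ k := i.pos
    have hcard : ((Finset.univ.erase i).card : ℤ) = (k : ℤ) - 1 := by
      rw [Finset.card_erase_of_mem (Finset.mem_univ i), Finset.card_univ, Fintype.card_fin]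
      omega
    rw [hcard] at hrest
    have hkK' : (k : ℤ) - 1 ≤ (K : ℤ) := by
      have : (k : ℤ) ≤ (K : ℤ) := by exact_mod_cast hkK
      omega
    have h9 : ((k : ℤ) - 1) * (L - 1) ≤ (K : ℤ) * (L - 1) :=
      mul_le_mul_of_nonneg_right hkK' (by omega)
    have hw := hW _ (h1 i)
    rw [hMdef]
    nlinarith [hsum, hrest]
  have hk1 : k ∈ Finset.range (K + 1) := Finset.mem_range.2 (Nat.lt_succ_of_le hkK)
  have hf : ∀ i, f i ∈ S := by
    intro i
    rw [hSdef, Finset.mem_product, Finset.mem_Icc]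
    have hn := h3 i
    exact ⟨h1 i, by omega, hfle i⟩
  exact Set.mem_biUnion hk1 ⟨f, hf, rfl⟩
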